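/- arXiv:2304.09221 — 2 statements merged into one kernel-verified Lean document; each statement's English description precedes it below -/
import Mathlib

section
/- Let {b_k} be a nonnegative real sequence satisfying b_{k+1} ≤ (1 − C₁/(k+n₀)^q) b_k + C₂/(k+n₀)^{q+p} for all k ≥ 1, with 0 < q < 1, p > 0, C₁, C₂, n₀ > 0. Then limsup_{k→∞} k^p · b_k ≤ C₂/C₁. -/
open Filter Real Topology

private lemma bern_aux (p t : ℝ) (hp : 0 ≤ p) (ht : 0 ≤ t) :
    1 - p * t ≤ (1 + t) ^ (-p) := by
  have h1 : (0:ℝ) < 1 + t := by linarith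
  have hlog : Real.log (1 + t) ≤ t := by
    have := Real.log_le_sub_one_of_pos h1; linarith
  have h2 : 1 - p * t ≤ Real.exp (-(p * t)) := by
    have := Real.add_one_le_exp (-(p*t)); linarith
  have h3 : Real.exp (-(p*t)) ≤ Real.exp (Real.log (1+t) * (-p)) := by
    apply Real.exp_le_exp.mpr; nlinarith
  calc 1 - p*t ≤ _ := h2
    _ ≤ _ := h3
    _ = (1+t) ^ (-p) := (Real.rpow_def_of_pos h1 _).symm

private lemma step_aux (A C₁ C₂ p q x : ℝ) (hp : 0 < p) (hq0 : 0 < q) (hq1 : q < 1)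
    (hx : 1 ≤ x) (hC : 0 < A * C₁ - C₂)
    (h2 : A * p ≤ (A * C₁ - C₂) * x ^ (1 - q)) (hA : 0 < A) :
    (1 - C₁ / x ^ q) * (A / x ^ p) + C₂ / x ^ (q + p) ≤ A / (x + 1) ^ p := by
  have hx0 : (0:ℝ) < x := by linarith
  have hu : (0:ℝ) < x ^ q := rpow_pos_of_pos hx0 q
  have hv : (0:ℝ) < x ^ p := rpow_pos_of_pos hx0 p
  have hw : (0:ℝ) < x ^ (1-q) := rpow_pos_of_pos hx0 (1-q)
  have hqp : x ^ (q+p) = x ^ q * x ^ p := rpow_add hx0 q p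
  have hp1 : x ^ (q+p) * x ^ (1-q) = x ^ (p+1) := by
    rw [← rpow_add hx0]; ring_nf
  have hb : A / x ^ p - A * p / (x ^ (q+p) * x ^ (1-q)) ≤ A / (x+1) ^ p := by
    rw [hp1]
    have hber := bern_aux p (1/x) hp.le (by positivity)
    have hsplit : (x+1:ℝ) ^ (-p) = x ^ (-p) * (1 + 1/x) ^ (-p) := by
      rw [← Real.mul_rpow hx0.le (by positivity)]
      congr 1
      field_simp
    have h4 : x ^ (-p) * (1 - p * (1/x)) ≤ x ^ (-p) * (1 + 1/x) ^ (-p) := by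
      apply mul_le_mul_of_nonneg_left hber (by positivity)
    have hxp1 : (0:ℝ) < (x+1) ^ p := rpow_pos_of_pos (by linarith) p
    have hinv : (x+1:ℝ) ^ (-p) = 1 / (x+1) ^ p := by
      rw [rpow_neg (by linarith)]; simp [one_div]
    have hinvx : x ^ (-p) = 1 / x ^ p := by rw [rpow_neg hx0.le]; simp [one_div]
    have hpp1 : x ^ (p+1) = x ^ p * x := by
      rw [rpow_add hx0, rpow_one]
    rw [hinvx] at h4
    rw [hinv, hinvx] at hsplit
    calc A / x ^ p - A * p / x ^ (p+1)
        = A * (1 / x ^ p * (1 - p * (1/x))) := by rw [hpp1]; field_simp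
      _ ≤ A * (1 / x ^ p * (1 + 1/x) ^ (-p)) := by
          apply mul_le_mul_of_nonneg_left h4 hA.le
      _ = A / (x+1) ^ p := by rw [← hsplit]; ring
  have hkey : A * p / (x ^ (q+p) * x ^ (1-q)) ≤ (A * C₁ - C₂) / x ^ (q+p) := by
    rw [div_le_div_iff₀ (by positivity) (by positivity)]
    calc A * p * x ^ (q+p) ≤ (A * C₁ - C₂) * x ^ (1-q) * x ^ (q+p) := by
          apply mul_le_mul_of_nonneg_right h2 (by positivity)
      _ = (A * C₁ - C₂) * (x ^ (q+p) * x ^ (1-q)) := by ring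
  have hexp : (1 - C₁ / x ^ q) * (A / x ^ p) + C₂ / x ^ (q+p)
      = A / x ^ p - (A * C₁ - C₂) / x ^ (q+p) := by
    rw [hqp]; field_simp; ring
  rw [hexp]
  linarith

theorem stmt5 (b : ℕ → ℝ) (C₁ C₂ n₀ p q : ℝ)
    (hb : ∀ k, 0 ≤ b k) (hq0 : 0 < q) (hq1 : q < 1) (hp : 0 < p)
    (hC₁ : 0 < C₁) (hC₂ : 0 < C₂) (hn₀ : 0 < n₀)
    (hrec : ∀ k : ℕ, 1 ≤ k →
      b (k + 1) ≤ (1 - C₁ / ((k : ℝ) + n₀) ^ q) * b k + C₂ / ((k : ℝ) + n₀) ^ (q + p)) :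
    limsup (fun k : ℕ => (k : ℝ) ^ p * b k) atTop ≤ C₂ / C₁ := by
  have hbound : ∀ ε > (0:ℝ), ∀ᶠ k : ℕ in atTop, (k:ℝ)^p * b k ≤ C₂/C₁ + ε := by
    intro ε hε
    set A : ℝ := C₂/C₁ + ε/2 with hAdef
    have hApos : 0 < A := by positivity
    have hAC : 0 < A * C₁ - C₂ := by
      have h1 : C₂/C₁*C₁ = C₂ := div_mul_cancel₀ C₂ hC₁.ne'
      rw [hAdef]; nlinarith
    have htend : Tendsto (fun k : ℕ => (k:ℝ) + n₀) atTop atTop :=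
      tendsto_atTop_add_const_right atTop n₀ tendsto_natCast_atTop_atTop
    have e1 : ∀ᶠ k : ℕ in atTop, C₁ ≤ ((k:ℝ) + n₀) ^ q :=
      ((tendsto_rpow_atTop hq0).comp htend).eventually_ge_atTop C₁
    have e2 : ∀ᶠ k : ℕ in atTop, A * p ≤ (A * C₁ - C₂) * ((k:ℝ) + n₀) ^ (1-q) := by
      have h := ((tendsto_rpow_atTop (by linarith : (0:ℝ) < 1 - q)).comp
        htend).eventually_ge_atTop (A * p / (A * C₁ - C₂))
      filter_upwards [h] with k hk
      simp only [Function.comp] at hk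
      rw [div_le_iff₀ hAC] at hk
      calc A * p ≤ ((k:ℝ)+n₀)^(1-q) * (A*C₁-C₂) := hk
        _ = _ := by ring
    obtain ⟨K, hK⟩ := eventually_atTop.mp ((e1.and e2).and (eventually_ge_atTop 1))
    have hcond : ∀ k, K ≤ k → C₁ ≤ ((k:ℝ)+n₀)^q ∧
        A * p ≤ (A*C₁-C₂) * ((k:ℝ)+n₀)^(1-q) ∧ 1 ≤ k := by
      intro k hk; obtain ⟨⟨a1, a2⟩, a3⟩ := hK k hk; exact ⟨a1, a2, a3⟩
    have hprodnn : ∀ k, 0 ≤ ∏ j ∈ Finset.Ico K k, (1 - C₁ / ((j:ℝ)+n₀)^q) := by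
      intro k
      apply Finset.prod_nonneg
      intro j hj
      obtain ⟨c1, -, -⟩ := hcond j (Finset.mem_Ico.mp hj).1
      have hj0 : (0:ℝ) < (j:ℝ) + n₀ := by positivity
      rw [sub_nonneg, div_le_one (rpow_pos_of_pos hj0 q)]; exact c1
    -- the key induction
    have main : ∀ k, K ≤ k → b k ≤ A / ((k:ℝ)+n₀)^p
        + b K * ∏ j ∈ Finset.Ico K k, (1 - C₁ / ((j:ℝ)+n₀)^q) := by
      intro k hk
      induction k, hk using Nat.le_induction with
      | base =>
        simp only [Finset.Ico_self, Finset.prod_empty, mul_one]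
        have h1 : (0:ℝ) < ((K:ℝ)+n₀)^p := rpow_pos_of_pos (by positivity) p
        have := div_pos hApos h1
        linarith
      | succ k hk ih =>
        obtain ⟨a1, a2, a3⟩ := hcond k hk
        have hx0 : (0:ℝ) < (k:ℝ) + n₀ := by positivity
        have hx1 : (1:ℝ) ≤ (k:ℝ) + n₀ := by
          have : (1:ℝ) ≤ (k:ℝ) := by exact_mod_cast a3
          linarith
        have hfac : 0 ≤ 1 - C₁ / ((k:ℝ)+n₀)^q := by
          rw [sub_nonneg, div_le_one (rpow_pos_of_pos hx0 q)]; exact a1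
        have hrk := hrec k a3
        have hmul := mul_le_mul_of_nonneg_left ih hfac
        have hstep := step_aux A C₁ C₂ p q ((k:ℝ)+n₀) hp hq0 hq1 hx1 hAC a2 hApos
        rw [Finset.prod_Ico_succ_top hk]
        have hcast : ((k+1:ℕ):ℝ) + n₀ = ((k:ℝ)+n₀) + 1 := by push_cast; ring
        rw [hcast]
        calc b (k+1) ≤ (1 - C₁ / ((k:ℝ)+n₀)^q) * b k + C₂ / ((k:ℝ)+n₀)^(q+p) := hrk
          _ ≤ (1 - C₁/((k:ℝ)+n₀)^q) * (A/((k:ℝ)+n₀)^p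
                + b K * ∏ j ∈ Finset.Ico K k, (1 - C₁/((j:ℝ)+n₀)^q))
                + C₂ / ((k:ℝ)+n₀)^(q+p) := by linarith
          _ ≤ A / (((k:ℝ)+n₀)+1)^p
                + b K * ((∏ j ∈ Finset.Ico K k, (1 - C₁/((j:ℝ)+n₀)^q))
                  * (1 - C₁/((k:ℝ)+n₀)^q)) := by nlinarith [hb K, hprodnn k]
          _ = _ := by ring
    -- the remainder times k^p tends to zero
    have hrem : Tendsto (fun k : ℕ => (k:ℝ)^p *
        (b K * ∏ j ∈ Finset.Ico K k, (1 - C₁ / ((j:ℝ)+n₀)^q))) atTop (𝓝 0) := by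
      have hg : Tendsto (fun k : ℕ => b K * ((k:ℝ)^p *
          Real.exp (-(C₁/4) * (k:ℝ)^(1-q)))) atTop (𝓝 0) := by
        have t1 := tendsto_rpow_mul_exp_neg_mul_atTop_nhds_zero (p/(1-q)) (C₁/4)
          (by positivity)
        have t2 : Tendsto (fun k : ℕ => (k:ℝ)^(1-q)) atTop atTop :=
          (tendsto_rpow_atTop (by linarith : (0:ℝ) < 1-q)).comp
            tendsto_natCast_atTop_atTop
        have t3 := t1.comp t2
        have heq : (fun k : ℕ => ((k:ℝ)^(1-q))^(p/(1-q))
              * Real.exp (-(C₁/4) * (k:ℝ)^(1-q)))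
            =ᶠ[atTop] (fun k : ℕ => (k:ℝ)^p * Real.exp (-(C₁/4) * (k:ℝ)^(1-q))) := by
          filter_upwards [eventually_ge_atTop 1] with k hk
          congr 1
          rw [← Real.rpow_mul (Nat.cast_nonneg k)]
          have h1q : (1:ℝ) - q ≠ 0 := by linarith
          rw [mul_div_cancel₀ p h1q]
        have t4 := Tendsto.congr' heq t3
        simpa using t4.const_mul (b K)
      apply squeeze_zero' ?_ ?_ hg
      · filter_upwards [eventually_ge_atTop K] with k hk
        have := hprodnn k
        have hbK := hb K
        positivity
      · have hn₀k : ∀ᶠ k : ℕ in atTop, n₀ ≤ (k:ℝ) := by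
          obtain ⟨m, hm⟩ := exists_nat_ge n₀
          filter_upwards [eventually_ge_atTop m] with k hk
          calc n₀ ≤ (m:ℝ) := hm
            _ ≤ (k:ℝ) := by exact_mod_cast hk
        filter_upwards [eventually_ge_atTop (2*K), eventually_ge_atTop 1, hn₀k]
          with k hk2 hk1 hkn
        have hkK : K ≤ k := by omega
        have hk0 : (0:ℝ) < (k:ℝ) := by exact_mod_cast hk1
        have hxq : (0:ℝ) < ((k:ℝ)+n₀)^q := rpow_pos_of_pos (by positivity) q
        -- product ≤ exp(-(card)•(min term))
        have hple : (∏ j ∈ Finset.Ico K k, (1 - C₁ / ((j:ℝ)+n₀)^q))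
            ≤ Real.exp (-(((k - K : ℕ):ℝ) * (C₁ / ((k:ℝ)+n₀)^q))) := by
          calc (∏ j ∈ Finset.Ico K k, (1 - C₁ / ((j:ℝ)+n₀)^q))
              ≤ ∏ j ∈ Finset.Ico K k, Real.exp (-(C₁ / ((j:ℝ)+n₀)^q)) := by
                apply Finset.prod_le_prod
                · intro j hj
                  obtain ⟨c1, -, -⟩ := hcond j (Finset.mem_Ico.mp hj).1
                  have hj0 : (0:ℝ) < (j:ℝ) + n₀ := by positivity
                  rw [sub_nonneg, div_le_one (rpow_pos_of_pos hj0 q)]; exact c1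
                · intro j hj
                  have := Real.add_one_le_exp (-(C₁ / ((j:ℝ)+n₀)^q))
                  linarith
            _ = Real.exp (∑ j ∈ Finset.Ico K k, -(C₁ / ((j:ℝ)+n₀)^q)) :=
                (Real.exp_sum _ _).symm
            _ ≤ Real.exp (-(((k - K : ℕ):ℝ) * (C₁ / ((k:ℝ)+n₀)^q))) := by
                apply Real.exp_le_exp.mpr
                rw [Finset.sum_neg_distrib, neg_le_neg_iff]
                have hcard := Finset.card_nsmul_le_sum (Finset.Ico K k)
                  (fun j => C₁ / ((j:ℝ)+n₀)^q) (C₁ / ((k:ℝ)+n₀)^q) ?_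
                · rwa [Nat.card_Ico, nsmul_eq_mul] at hcard
                · intro j hj
                  obtain ⟨-, hjk⟩ := Finset.mem_Ico.mp hj
                  have hj0 : (0:ℝ) < (j:ℝ) + n₀ := by positivity
                  apply div_le_div_of_nonneg_left hC₁.le (rpow_pos_of_pos hj0 q)
                  apply rpow_le_rpow hj0.le _ hq0.le
                  have : (j:ℝ) ≤ (k:ℝ) := by exact_mod_cast hjk.le
                  linarith
        -- exponent comparison
        have hexpcmp : (C₁/4) * (k:ℝ)^(1-q)
            ≤ ((k - K : ℕ):ℝ) * (C₁ / ((k:ℝ)+n₀)^q) := by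
          have hkq : (0:ℝ) < (k:ℝ)^q := rpow_pos_of_pos hk0 q
          have hcast : ((k - K : ℕ):ℝ) = (k:ℝ) - (K:ℝ) := by
            have : K ≤ k := hkK
            push_cast [Nat.cast_sub this]; ring
          have h1 : (k:ℝ)/2 ≤ ((k - K : ℕ):ℝ) := by
            rw [hcast]
            have : (2*K : ℕ) ≤ k := hk2
            have h2k : ((2*K:ℕ):ℝ) ≤ (k:ℝ) := by exact_mod_cast this
            push_cast at h2k
            linarith
          have h2 : ((k:ℝ)+n₀)^q ≤ 2 * (k:ℝ)^q := by
            calc ((k:ℝ)+n₀)^q ≤ ((2:ℝ)*(k:ℝ))^q := by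
                  apply rpow_le_rpow (by positivity) (by linarith) hq0.le
              _ = (2:ℝ)^q * (k:ℝ)^q := mul_rpow (by norm_num) hk0.le
              _ ≤ 2 * (k:ℝ)^q := by
                  apply mul_le_mul_of_nonneg_right _ hkq.le
                  calc (2:ℝ)^q ≤ (2:ℝ)^(1:ℝ) :=
                        rpow_le_rpow_of_exponent_le (by norm_num) hq1.le
                    _ = 2 := rpow_one 2
          have h3 : (k:ℝ)^(1-q) = (k:ℝ) / (k:ℝ)^q := by
            rw [rpow_sub hk0, rpow_one]
          rw [h3]
          have h4 : C₁ / (2 * (k:ℝ)^q) ≤ C₁ / ((k:ℝ)+n₀)^q :=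
            div_le_div_of_nonneg_left hC₁.le hxq h2
          calc (C₁/4) * ((k:ℝ) / (k:ℝ)^q) = ((k:ℝ)/2) * (C₁ / (2*(k:ℝ)^q)) := by
                field_simp; ring
            _ ≤ ((k - K : ℕ):ℝ) * (C₁ / ((k:ℝ)+n₀)^q) := by
                apply mul_le_mul h1 h4 (by positivity) (by positivity)
        have hexp2 : Real.exp (-(((k - K : ℕ):ℝ) * (C₁ / ((k:ℝ)+n₀)^q)))
            ≤ Real.exp (-(C₁/4) * (k:ℝ)^(1-q)) := by
          apply Real.exp_le_exp.mpr
          rw [neg_mul]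
          exact neg_le_neg hexpcmp
        have hkp : (0:ℝ) ≤ (k:ℝ)^p := rpow_nonneg hk0.le p
        calc (k:ℝ)^p * (b K * ∏ j ∈ Finset.Ico K k, (1 - C₁ / ((j:ℝ)+n₀)^q))
            ≤ (k:ℝ)^p * (b K * Real.exp (-(C₁/4) * (k:ℝ)^(1-q))) := by
              apply mul_le_mul_of_nonneg_left _ hkp
              apply mul_le_mul_of_nonneg_left _ (hb K)
              exact hple.trans hexp2
          _ = b K * ((k:ℝ)^p * Real.exp (-(C₁/4) * (k:ℝ)^(1-q))) := by ring
    -- combine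
    filter_upwards [eventually_ge_atTop K,
      hrem.eventually (gt_mem_nhds (by linarith : (0:ℝ) < ε/2))] with k hkK hsmall
    have hm := main k hkK
    have hkp : (0:ℝ) ≤ (k:ℝ)^p := rpow_nonneg (Nat.cast_nonneg k) p
    have h1 : (k:ℝ)^p * b k ≤ (k:ℝ)^p * (A/((k:ℝ)+n₀)^p)
        + (k:ℝ)^p * (b K * ∏ j ∈ Finset.Ico K k, (1 - C₁ / ((j:ℝ)+n₀)^q)) := by
      nlinarith [mul_le_mul_of_nonneg_left hm hkp]
    have h2 : (k:ℝ)^p * (A/((k:ℝ)+n₀)^p) ≤ A := by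
      have hxp : (0:ℝ) < ((k:ℝ)+n₀)^p := rpow_pos_of_pos (by positivity) p
      have hle : (k:ℝ)^p ≤ ((k:ℝ)+n₀)^p :=
        rpow_le_rpow (Nat.cast_nonneg k) (by linarith) hp.le
      rw [mul_div_assoc', mul_comm, mul_div_assoc]
      calc A * ((k:ℝ)^p / ((k:ℝ)+n₀)^p) ≤ A * 1 := by
            apply mul_le_mul_of_nonneg_left _ hApos.le
            rw [div_le_one hxp]; exact hle
        _ = A := mul_one A
    have : (k:ℝ)^p * b k ≤ A + ε/2 := by linarith
    rw [hAdef] at this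
    linarith
  refine le_of_forall_pos_le_add fun ε hε => ?_
  exact limsup_le_of_le
    (isCoboundedUnder_le_of_le atTop
      (fun k => mul_nonneg (rpow_nonneg (Nat.cast_nonneg k) p) (hb k)))
    (hbound ε hε)
end

section
/- Consider a deep feedforward network φ(x,θ) = W_L σ_{L-1}(⋯ σ_1(W_1 x + b_1) ⋯ + b_{L-1}) + b_L with depth L ≥ 2, output dimension 1, activations σ_l ∈ C¹ with σ_l(0) = 0 and σ_l' ≥ c_l > 0 acting componentwise. Fix α̃ > 0, initialization θ_0 with b_l = 0 for all l, W_1 = 0, all entries of W_2,…,W_{L-1} at least R > 0, and all entries of W_L at least A > R/2. If θ' is such that |θ' − θ_0| ≤ R/2, all entries of (W_1' x + b_1') are ≥ α̃|θ'−θ_0| for the given input x, and b_2',…,b_L' ≥ 0 componentwise, then φ(x, θ') ≥ (A − R/2)(R/2)^{L-2} c_{L-1}⋯c_1 d_{L-1}⋯d_1 α̃ |θ' − θ_0|, where d_l is the width of layer l. -/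
/-- Hidden-layer forward pass of a feedforward network: `hiddenLayer dim σ W b x l`
is the output of the `l`-th hidden layer (with `hiddenLayer … 0 = x`),
where layer `l+1` applies the activation `σ l` componentwise after the affine map
given by the weight matrix `W l` and bias `b l`. -/
noncomputable def hiddenLayer (dim : ℕ → ℕ) (σ : ℕ → ℝ → ℝ)
    (W : ∀ l : ℕ, Matrix (Fin (dim (l + 1))) (Fin (dim l)) ℝ)
    (b : ∀ l : ℕ, Fin (dim (l + 1)) → ℝ)
    (x : Fin (dim 0) → ℝ) : ∀ l : ℕ, Fin (dim l) → ℝ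
  | 0 => x
  | l + 1 => fun j => σ l ((W l).mulVec (hiddenLayer dim σ W b x l) j + b l j)

/-!
Write `t = |θ' - θ₀|`. Every weight moves by at most `t ≤ R/2`, so the entries of the middle
layers stay `≥ R/2` and those of the last layer `≥ A - R/2`. Since `σ_l(0) = 0` and
`σ_l' ≥ c_l`, the mean value inequality gives `σ_l(s) ≥ c_l s` for `s ≥ 0`. Starting from the
first-layer bound `α̃ t`, a lower bound `β` on every unit of layer `l` with nonnegative weights
`≥ w` and nonnegative biases yields the lower bound `c_l d_l w β` on layer `l + 1`.
-/

open Finset Matrix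

theorem mul_le_of_le_deriv {f : ℝ → ℝ} {c s : ℝ} (hf : Differentiable ℝ f) (hf0 : f 0 = 0)
    (hc : ∀ t, c ≤ deriv f t) (hs : 0 ≤ s) : c * s ≤ f s := by
  simpa [hf0] using mul_sub_le_image_sub_of_le_deriv hf hc hs

theorem Matrix.card_mul_le_mulVec {α m n : Type*} [Fintype n] [Semiring α] [PartialOrder α]
    [IsOrderedRing α] {M : Matrix m n α} {v : n → α} {a β : α} (ha : 0 ≤ a) (hβ : 0 ≤ β)
    (i : m) (hM : ∀ k, a ≤ M i k) (hv : ∀ k, β ≤ v k) :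
    (Fintype.card n : α) * (a * β) ≤ (M *ᵥ v) i :=
  calc (Fintype.card n : α) * (a * β) = ∑ _k : n, a * β := by
        rw [sum_const, card_univ, nsmul_eq_mul]
    _ ≤ ∑ k, M i k * v k := sum_le_sum fun k _ => mul_le_mul (hM k) (hv k) hβ (ha.trans (hM k))

theorem sq_entry_sub_le_sum_range {L : ℕ} {dim : ℕ → ℕ}
    (W W0 : ∀ l : ℕ, Matrix (Fin (dim (l + 1))) (Fin (dim l)) ℝ)
    (b : ∀ l : ℕ, Fin (dim (l + 1)) → ℝ) {l : ℕ} (hl : l < L) (i : Fin (dim (l + 1)))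
    (j : Fin (dim l)) :
    (W l i j - W0 l i j) ^ 2 ≤ ∑ l ∈ range L,
      ((∑ i, ∑ j, (W l i j - W0 l i j) ^ 2) + ∑ j, (b l j) ^ 2) := by
  have hrow : (W l i j - W0 l i j) ^ 2 ≤ ∑ j, (W l i j - W0 l i j) ^ 2 :=
    single_le_sum (f := fun j => (W l i j - W0 l i j) ^ 2) (fun _ _ => sq_nonneg _) (mem_univ j)
  have hmat : ∑ j, (W l i j - W0 l i j) ^ 2 ≤ ∑ i, ∑ j, (W l i j - W0 l i j) ^ 2 :=
    single_le_sum (f := fun i => ∑ j, (W l i j - W0 l i j) ^ 2)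
      (fun _ _ => sum_nonneg fun _ _ => sq_nonneg _) (mem_univ i)
  have hlayer : ∑ i, ∑ j, (W l i j - W0 l i j) ^ 2 ≤
      (∑ i, ∑ j, (W l i j - W0 l i j) ^ 2) + ∑ j, (b l j) ^ 2 :=
    le_add_of_nonneg_right (sum_nonneg fun _ _ => sq_nonneg _)
  have hall := single_le_sum
    (f := fun l => (∑ i, ∑ j, (W l i j - W0 l i j) ^ 2) + ∑ j, (b l j) ^ 2)
    (fun _ _ => add_nonneg (sum_nonneg fun _ _ => sum_nonneg fun _ _ => sq_nonneg _)
      (sum_nonneg fun _ _ => sq_nonneg _)) (mem_range.mpr hl)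
  exact hrow.trans (hmat.trans (hlayer.trans hall))

section HiddenLayer

variable {dim : ℕ → ℕ} {σ : ℕ → ℝ → ℝ}
  {W : ∀ l : ℕ, Matrix (Fin (dim (l + 1))) (Fin (dim l)) ℝ} {b : ∀ l : ℕ, Fin (dim (l + 1)) → ℝ}
  {x : Fin (dim 0) → ℝ} {c : ℕ → ℝ} {w β : ℝ}

theorem layer_bound_nonneg (hc : ∀ l, 0 ≤ c l) (hw : 0 ≤ w) (hβ : 0 ≤ β) (m : ℕ) :
    0 ≤ (∏ k ∈ range (m + 1), c k) * w ^ m * (∏ k ∈ Icc 1 m, (dim k : ℝ)) * β :=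
  mul_nonneg (mul_nonneg (mul_nonneg (prod_nonneg fun k _ => hc k) (pow_nonneg hw m))
    (prod_nonneg fun _ _ => Nat.cast_nonneg _)) hβ

theorem le_hiddenLayer_succ {l : ℕ} {cl : ℝ} (hσ : ∀ s, 0 ≤ s → cl * s ≤ σ l s) (hc : 0 ≤ cl)
    (hw : 0 ≤ w) (hβ : 0 ≤ β) (hprev : ∀ k, β ≤ hiddenLayer dim σ W b x l k)
    (i : Fin (dim (l + 1))) (hW : ∀ k, w ≤ W l i k) (hb : 0 ≤ b l i) :
    cl * (dim l * (w * β)) ≤ hiddenLayer dim σ W b x (l + 1) i := by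
  have hpre := Matrix.card_mul_le_mulVec hw hβ i hW hprev
  rw [Fintype.card_fin] at hpre
  have harg : (dim l : ℝ) * (w * β) ≤ (W l *ᵥ hiddenLayer dim σ W b x l) i + b l i := by
    linarith
  calc cl * (dim l * (w * β)) ≤ cl * ((W l *ᵥ hiddenLayer dim σ W b x l) i + b l i) :=
        mul_le_mul_of_nonneg_left harg hc
    _ ≤ _ := hσ _ ((by positivity : (0 : ℝ) ≤ dim l * (w * β)).trans harg)

theorem le_hiddenLayer (hσ : ∀ l s, 0 ≤ s → c l * s ≤ σ l s) (hc : ∀ l, 0 ≤ c l)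
    (hw : 0 ≤ w) (hβ : 0 ≤ β) (hfirst : ∀ j, β ≤ (W 0 *ᵥ x) j + b 0 j) (m : ℕ)
    (hW : ∀ l, 1 ≤ l → l ≤ m → ∀ i j, w ≤ W l i j) (hb : ∀ l, 1 ≤ l → l ≤ m → ∀ j, 0 ≤ b l j)
    (i : Fin (dim (m + 1))) :
    (∏ k ∈ range (m + 1), c k) * w ^ m * (∏ k ∈ Icc 1 m, (dim k : ℝ)) * β ≤
      hiddenLayer dim σ W b x (m + 1) i := by
  induction m with
  | zero =>
    calc _ = c 0 * β := by simp
      _ ≤ c 0 * ((W 0 *ᵥ x) i + b 0 i) := mul_le_mul_of_nonneg_left (hfirst i) (hc 0)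
      _ ≤ hiddenLayer dim σ W b x 1 i := hσ 0 _ (hβ.trans (hfirst i))
  | succ m ih =>
    have hstep := le_hiddenLayer_succ (hσ (m + 1)) (hc (m + 1)) hw
      (layer_bound_nonneg hc hw hβ m)
      (ih (fun l hl hlm => hW l hl (by omega)) (fun l hl hlm => hb l hl (by omega))) i
      (hW (m + 1) (by omega) le_rfl i) (hb (m + 1) (by omega) le_rfl i)
    convert hstep using 1
    rw [prod_range_succ, prod_Icc_succ_top (by omega), pow_succ]
    ring

end HiddenLayer

theorem stmt17_general (L : ℕ) (hL : 2 ≤ L)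
    (dim : ℕ → ℕ)
    (σ : ℕ → ℝ → ℝ) (c : ℕ → ℝ)
    (hσdiff : ∀ l, Differentiable ℝ (σ l)) (hσ0 : ∀ l, σ l 0 = 0)
    (hc : ∀ l, 0 < c l) (hderiv : ∀ l t, c l ≤ deriv (σ l) t)
    (R A αt : ℝ) (hR : 0 < R) (hA : R / 2 < A) (hαt : 0 < αt)
    -- the parameter θ' = (W, b) and the initialization θ₀ = (W0, 0)
    (W W0 : ∀ l : ℕ, Matrix (Fin (dim (l + 1))) (Fin (dim l)) ℝ)
    (b : ∀ l : ℕ, Fin (dim (l + 1)) → ℝ)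
    (hW0mid : ∀ l : ℕ, 1 ≤ l → l ≤ L - 2 → ∀ i j, R ≤ W0 l i j)
    (hW0last : ∀ i j, A ≤ W0 (L - 1) i j)
    (x : Fin (dim 0) → ℝ) :
    -- the Euclidean distance |θ' − θ₀|
    let t : ℝ := Real.sqrt (∑ l ∈ Finset.range L,
      ((∑ i, ∑ j, (W l i j - W0 l i j) ^ 2) + ∑ j, (b l j) ^ 2))
    t ≤ R / 2 →
    (∀ j, αt * t ≤ (W 0).mulVec x j + b 0 j) →
    (∀ l : ℕ, 1 ≤ l → ∀ j, 0 ≤ b l j) →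
    ∀ j : Fin (dim (L - 1 + 1)),
      (A - R / 2) * (R / 2) ^ (L - 2) * (∏ l ∈ Finset.range (L - 1), c l) *
          (∏ l ∈ Finset.Icc 1 (L - 1), (dim l : ℝ)) * αt * t ≤
        (W (L - 1)).mulVec (hiddenLayer dim σ W b x (L - 1)) j + b (L - 1) j := by
  intro t ht hfirst hb j
  obtain ⟨m, rfl⟩ : ∃ m, L = m + 2 := ⟨L - 2, by omega⟩
  replace hW0last : ∀ i j, A ≤ W0 (m + 1) i j := hW0last
  have hdev : ∀ l < m + 2, ∀ i j, W0 l i j - t ≤ W l i j := fun l hl i j => by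
    have := abs_le.mp (Real.abs_le_sqrt (sq_entry_sub_le_sum_range W W0 b hl i j))
    linarith
  have hR2 : 0 ≤ R / 2 := by positivity
  have hαtt : 0 ≤ αt * t := mul_nonneg hαt.le (Real.sqrt_nonneg _)
  have hhidden := le_hiddenLayer (σ := σ) (fun l _ hs => mul_le_of_le_deriv (hσdiff l) (hσ0 l) (hderiv l) hs)
    (fun l => (hc l).le) hR2 hαtt hfirst m
    (fun l hl hlm i j => by linarith [hdev l (by omega) i j, hW0mid l hl hlm i j])
    (fun l hl _ => hb l hl)
  have hout := Matrix.card_mul_le_mulVec (M := W (m + 1)) (sub_nonneg.mpr hA.le)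
    (layer_bound_nonneg (fun l => (hc l).le) hR2 hαtt m) j
    (fun k => by linarith [hdev (m + 1) (by omega) j k, hW0last j k]) hhidden
  rw [Fintype.card_fin] at hout
  calc (A - R / 2) * (R / 2) ^ m * (∏ l ∈ range (m + 1), c l) *
        (∏ l ∈ Icc 1 (m + 1), (dim l : ℝ)) * αt * t
      = dim (m + 1) * ((A - R / 2) *
          ((∏ k ∈ range (m + 1), c k) * (R / 2) ^ m * (∏ k ∈ Icc 1 m, (dim k : ℝ)) * (αt * t))) := by
        rw [prod_Icc_succ_top (by omega)]
        ring
    _ ≤ (W (m + 1) *ᵥ hiddenLayer dim σ W b x (m + 1)) j + b (m + 1) j :=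
        hout.trans (le_add_of_nonneg_right (hb (m + 1) (by omega) j))

theorem stmt17 (L : ℕ) (hL : 2 ≤ L)
    (dim : ℕ → ℕ) (hdim : ∀ l, 0 < dim l) (hdL : dim L = 1)
    (σ : ℕ → ℝ → ℝ) (c : ℕ → ℝ)
    (hσdiff : ∀ l, Differentiable ℝ (σ l)) (hσ0 : ∀ l, σ l 0 = 0)
    (hc : ∀ l, 0 < c l) (hderiv : ∀ l t, c l ≤ deriv (σ l) t)
    (R A αt : ℝ) (hR : 0 < R) (hA : R / 2 < A) (hαt : 0 < αt)
    -- the parameter θ' = (W, b) and the initialization θ₀ = (W0, 0)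
    (W W0 : ∀ l : ℕ, Matrix (Fin (dim (l + 1))) (Fin (dim l)) ℝ)
    (b : ∀ l : ℕ, Fin (dim (l + 1)) → ℝ)
    (hW0first : W0 0 = 0)
    (hW0mid : ∀ l : ℕ, 1 ≤ l → l ≤ L - 2 → ∀ i j, R ≤ W0 l i j)
    (hW0last : ∀ i j, A ≤ W0 (L - 1) i j)
    (x : Fin (dim 0) → ℝ) :
    -- the Euclidean distance |θ' − θ₀|
    let t : ℝ := Real.sqrt (∑ l ∈ Finset.range L,
      ((∑ i, ∑ j, (W l i j - W0 l i j) ^ 2) + ∑ j, (b l j) ^ 2))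
    t ≤ R / 2 →
    (∀ j, αt * t ≤ (W 0).mulVec x j + b 0 j) →
    (∀ l : ℕ, 1 ≤ l → ∀ j, 0 ≤ b l j) →
    ∀ j : Fin (dim (L - 1 + 1)),
      (A - R / 2) * (R / 2) ^ (L - 2) * (∏ l ∈ Finset.range (L - 1), c l) *
          (∏ l ∈ Finset.Icc 1 (L - 1), (dim l : ℝ)) * αt * t ≤
        (W (L - 1)).mulVec (hiddenLayer dim σ W b x (L - 1)) j + b (L - 1) j :=
  stmt17_general L hL dim σ c hσdiff hσ0 hc hderiv R A αt hR hA hαt W W0 b hW0mid hW0last x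
end
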